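/- If an algebraic curvature operator Rm on Λ²ℝⁿ has nonnegative complex sectional curvature, then the Bochner–Weitzenböck operator on two-forms is nonnegative: ⟨(Ric ∧ id − Rm)(Ω), Ω⟩ ≥ 0 for every two-form Ω. -/

import Mathlib

open scoped BigOperators
open Finset

section NWHelpers

variable {n : ℕ} {M : Type*} [AddCommMonoid M]

private lemma nw_nest4 (f : Fin n → Fin n → Fin n → Fin n → M) :
    ∑ x : Fin n × Fin n × Fin n × Fin n, f x.1 x.2.1 x.2.2.1 x.2.2.2
      = ∑ i, ∑ j, ∑ k, ∑ l, f i j k l := by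
  simp only [Fintype.sum_prod_type]

private lemma nw_nest3 (f : Fin n → Fin n → Fin n → M) :
    ∑ x : Fin n × Fin n × Fin n, f x.1 x.2.1 x.2.2 = ∑ i, ∑ j, ∑ k, f i j k := by
  simp only [Fintype.sum_prod_type]

private lemma nw_swap23 (f : Fin n → Fin n → Fin n → M) :
    ∑ i, ∑ j, ∑ k, f i j k = ∑ i, ∑ k, ∑ j, f i j k :=
  Finset.sum_congr rfl fun _ _ => Finset.sum_comm

private lemma nw_swap3 (f : Fin n → Fin n → Fin n → M) :
    ∑ b, ∑ m, ∑ p, f b m p = ∑ m, ∑ p, ∑ b, f b m p := by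
  rw [Finset.sum_comm]
  exact Finset.sum_congr rfl fun _ _ => Finset.sum_comm

private lemma nw_rev3 (f : Fin n → Fin n → Fin n → M) :
    ∑ i, ∑ j, ∑ k, f k j i = ∑ i, ∑ j, ∑ k, f i j k := by
  rw [← nw_nest3 (fun i j k => f k j i), ← nw_nest3 f]
  exact Equiv.sum_comp ⟨fun x => (x.2.2, x.2.1, x.1), fun x => (x.2.2, x.2.1, x.1),
    fun x => rfl, fun x => rfl⟩ (fun x => f x.1 x.2.1 x.2.2)

private lemma nw_swap5 (g : Fin n → Fin n → Fin n → Fin n → Fin n → M) :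
    ∑ p, ∑ i, ∑ j, ∑ k, ∑ l, g p i j k l = ∑ i, ∑ j, ∑ k, ∑ l, ∑ p, g p i j k l := by
  rw [Finset.sum_comm]
  refine Finset.sum_congr rfl fun i _ => ?_
  rw [Finset.sum_comm]
  refine Finset.sum_congr rfl fun j _ => ?_
  rw [Finset.sum_comm]
  refine Finset.sum_congr rfl fun k _ => ?_
  exact Finset.sum_comm

private lemma nw_swap6 (g : Fin n → Fin n → Fin n → Fin n → Fin n → Fin n → M) :
    ∑ m, ∑ p, ∑ i, ∑ j, ∑ k, ∑ l, g m p i j k l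
      = ∑ i, ∑ j, ∑ k, ∑ l, ∑ m, ∑ p, g m p i j k l := by
  have h1 : ∀ m, ∑ p, ∑ i, ∑ j, ∑ k, ∑ l, g m p i j k l
      = ∑ i, ∑ j, ∑ k, ∑ l, ∑ p, g m p i j k l := fun m => nw_swap5 (fun p i j k l => g m p i j k l)
  calc ∑ m, ∑ p, ∑ i, ∑ j, ∑ k, ∑ l, g m p i j k l
      = ∑ m, ∑ i, ∑ j, ∑ k, ∑ l, ∑ p, g m p i j k l := Finset.sum_congr rfl fun m _ => h1 m
    _ = ∑ i, ∑ j, ∑ k, ∑ l, ∑ m, ∑ p, g m p i j k l :=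
        nw_swap5 (fun m i j k l => ∑ p, g m p i j k l)

private lemma nw_pairswap4 (f : Fin n → Fin n → Fin n → Fin n → M) :
    ∑ i, ∑ j, ∑ k, ∑ l, f k l i j = ∑ i, ∑ j, ∑ k, ∑ l, f i j k l := by
  rw [← nw_nest4 (fun i j k l => f k l i j), ← nw_nest4 f]
  exact Equiv.sum_comp ⟨fun x => (x.2.2.1, x.2.2.2, x.1, x.2.1),
    fun x => (x.2.2.1, x.2.2.2, x.1, x.2.1), fun x => rfl, fun x => rfl⟩
    (fun x => f x.1 x.2.1 x.2.2.1 x.2.2.2)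

private lemma nw_cycA4 (f : Fin n → Fin n → Fin n → Fin n → M) :
    ∑ i, ∑ j, ∑ k, ∑ l, f j k i l = ∑ i, ∑ j, ∑ k, ∑ l, f i j k l := by
  rw [← nw_nest4 (fun i j k l => f j k i l), ← nw_nest4 f]
  exact Equiv.sum_comp ⟨fun x => (x.2.1, x.2.2.1, x.1, x.2.2.2),
    fun x => (x.2.2.1, x.1, x.2.1, x.2.2.2), fun x => rfl, fun x => rfl⟩
    (fun x => f x.1 x.2.1 x.2.2.1 x.2.2.2)

private lemma nw_cycB4 (f : Fin n → Fin n → Fin n → Fin n → M) :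
    ∑ i, ∑ j, ∑ k, ∑ l, f k i j l = ∑ i, ∑ j, ∑ k, ∑ l, f i j k l := by
  rw [← nw_nest4 (fun i j k l => f k i j l), ← nw_nest4 f]
  exact Equiv.sum_comp ⟨fun x => (x.2.2.1, x.1, x.2.1, x.2.2.2),
    fun x => (x.2.1, x.2.2.1, x.1, x.2.2.2), fun x => rfl, fun x => rfl⟩
    (fun x => f x.1 x.2.1 x.2.2.1 x.2.2.2)

private lemma nw_swaplast4 (f : Fin n → Fin n → Fin n → Fin n → M) :
    ∑ i, ∑ j, ∑ k, ∑ l, f i j l k = ∑ i, ∑ j, ∑ k, ∑ l, f i j k l := by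
  refine Finset.sum_congr rfl fun i _ => Finset.sum_congr rfl fun j _ => Finset.sum_comm

private lemma nw_swapD4 (f : Fin n → Fin n → Fin n → Fin n → M) :
    ∑ i, ∑ j, ∑ k, ∑ l, f j i l k = ∑ i, ∑ j, ∑ k, ∑ l, f i j k l := by
  rw [← nw_nest4 (fun i j k l => f j i l k), ← nw_nest4 f]
  exact Equiv.sum_comp ⟨fun x => (x.2.1, x.1, x.2.2.2, x.2.2.1),
    fun x => (x.2.1, x.1, x.2.2.2, x.2.2.1), fun x => rfl, fun x => rfl⟩
    (fun x => f x.1 x.2.1 x.2.2.1 x.2.2.2)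

private lemma nw_rev4 (f : Fin n → Fin n → Fin n → Fin n → M) :
    ∑ i, ∑ j, ∑ k, ∑ l, f l k j i = ∑ i, ∑ j, ∑ k, ∑ l, f i j k l := by
  rw [← nw_nest4 (fun i j k l => f l k j i), ← nw_nest4 f]
  exact Equiv.sum_comp ⟨fun x => (x.2.2.2, x.2.2.1, x.2.1, x.1),
    fun x => (x.2.2.2, x.2.2.1, x.2.1, x.1), fun x => rfl, fun x => rfl⟩
    (fun x => f x.1 x.2.1 x.2.2.1 x.2.2.2)

end NWHelpers


private lemma nw_congr2 {n : ℕ} {M : Type*} [AddCommMonoid M] {f g : Fin n → Fin n → M}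
    (h : ∀ i j, f i j = g i j) : ∑ i, ∑ j, f i j = ∑ i, ∑ j, g i j :=
  Finset.sum_congr rfl fun i _ => Finset.sum_congr rfl fun j _ => h i j

private lemma nw_congr3 {n : ℕ} {M : Type*} [AddCommMonoid M] {f g : Fin n → Fin n → Fin n → M}
    (h : ∀ i j k, f i j k = g i j k) : ∑ i, ∑ j, ∑ k, f i j k = ∑ i, ∑ j, ∑ k, g i j k :=
  Finset.sum_congr rfl fun i _ => Finset.sum_congr rfl fun j _ => Finset.sum_congr rfl fun k _ => h i j k

private lemma nw_congr4 {n : ℕ} {M : Type*} [AddCommMonoid M]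
    {f g : Fin n → Fin n → Fin n → Fin n → M}
    (h : ∀ i j k l, f i j k l = g i j k l) :
    ∑ i, ∑ j, ∑ k, ∑ l, f i j k l = ∑ i, ∑ j, ∑ k, ∑ l, g i j k l :=
  Finset.sum_congr rfl fun i _ => Finset.sum_congr rfl fun j _ => Finset.sum_congr rfl
    fun k _ => Finset.sum_congr rfl fun l _ => h i j k l


/-- The inner product on `Λ²ℝⁿ ≅ 𝔰𝔬(n)`, `⟨A,B⟩ = (1/2)·tr(AᵀB)`. -/
noncomputable def soInner {n : ℕ} (A B : Fin n → Fin n → ℝ) : ℝ :=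
  (1 / 2) * ∑ a, ∑ b, A a b * B a b

/-- The curvature operator `Rm` acting on `Λ²ℝⁿ ≅ 𝔰𝔬(n)`, in components. -/
noncomputable def rmOp {n : ℕ} (R4 : Fin n → Fin n → Fin n → Fin n → ℝ)
    (M : Fin n → Fin n → ℝ) : Fin n → Fin n → ℝ :=
  fun k l => (1 / 2) * ∑ i, ∑ j, R4 i j k l * M i j

/-- The operator `Ric ∧ id` on `Λ²ℝⁿ`, in components, where
`Ric a b = ∑ i, R4 a i b i` and `(A ∧ B)(X∧Y) = (1/2)(A(X)∧B(Y)+B(X)∧A(Y))`. -/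
noncomputable def ricWedgeId {n : ℕ} (R4 : Fin n → Fin n → Fin n → Fin n → ℝ)
    (M : Fin n → Fin n → ℝ) : Fin n → Fin n → ℝ :=
  fun a b => (1 / 2) * ∑ k, ((∑ i, R4 a i k i) * M k b + M a k * (∑ i, R4 k i b i))

/-- Remark 5.2 of Ni–Wilking: if an algebraic curvature operator has
nonnegative complex sectional curvature (`R(U,V,Ū,V̄) ≥ 0` for all
`U, V ∈ ℂⁿ`, with `R` extended complex-multilinearly), then the
Bochner–Weitzenböck operator on two-forms is nonnegative:
`⟨(Ric ∧ id − Rm)(Ω), Ω⟩ ≥ 0` for every two-form `Ω`. -/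
theorem stmt_19 (n : ℕ)
    (R : EuclideanSpace ℝ (Fin n) →ₗ[ℝ] EuclideanSpace ℝ (Fin n) →ₗ[ℝ]
      EuclideanSpace ℝ (Fin n) →ₗ[ℝ] EuclideanSpace ℝ (Fin n) →ₗ[ℝ] ℝ)
    (hanti : ∀ X Y Z W, R X Y Z W = - R Y X Z W)
    (hpair : ∀ X Y Z W, R X Y Z W = R Z W X Y)
    (hbianchi : ∀ X Y Z W, R X Y Z W + R Y Z X W + R Z X Y W = 0)
    -- the components of `R` in the standard orthonormal basis
    (R4 : Fin n → Fin n → Fin n → Fin n → ℝ)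
    (hR4 : ∀ i j k l, R4 i j k l =
      R (EuclideanSpace.single i 1) (EuclideanSpace.single j 1)
        (EuclideanSpace.single k 1) (EuclideanSpace.single l 1))
    -- nonnegative complex sectional curvature
    (hcplx : ∀ U V : Fin n → ℂ,
      0 ≤ (∑ i, ∑ j, ∑ k, ∑ l, U i * V j * star (U k) * star (V l) *
        (R4 i j k l : ℂ)).re)
    (Ω : Fin n → Fin n → ℝ) (hΩanti : ∀ a b, Ω a b = - Ω b a) :
    0 ≤ soInner (fun a b => ricWedgeId R4 Ω a b - rmOp R4 Ω a b) Ω := by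
  classical
  -- symmetries of R4
  have s1 : ∀ i j k l, R4 j i k l = - R4 i j k l := by
    intro i j k l; rw [hR4, hR4]; exact hanti _ _ _ _
  have s2 : ∀ i j k l, R4 i j k l = R4 k l i j := by
    intro i j k l; rw [hR4, hR4]; exact hpair _ _ _ _
  have s4 : ∀ i j k l, R4 i j l k = - R4 i j k l := by
    intro i j k l; rw [s2 i j l k, s2 i j k l, s1 l k i j, neg_neg]
  have sdbl : ∀ i j k l, R4 j i l k = R4 i j k l := by
    intro i j k l; rw [s4 j i k l, s1 i j k l]; ring
  have s3 : ∀ i j k l, R4 i j k l + R4 j k i l + R4 k i j l = 0 := by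
    intro i j k l; rw [hR4, hR4, hR4]; exact hbianchi _ _ _ _
  -- real quantities
  set T2 : ℝ := ∑ a, ∑ k, ∑ b, (∑ i, R4 a i k i) * (Ω a b * Ω k b) with hT2def
  set G : ℝ := ∑ i, ∑ j, ∑ k, ∑ l, R4 i j k l * (Ω i j * Ω k l) with hGdef
  set G2 : ℝ := ∑ i, ∑ j, ∑ k, ∑ l, R4 i j k l * (Ω i k * Ω j l) with hG2def
  have step1 : soInner (fun a b => ricWedgeId R4 Ω a b - rmOp R4 Ω a b) Ω
      = (1/2)*T2 - (1/4)*G := by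
    have inner_eq : ∀ a b : Fin n, (ricWedgeId R4 Ω a b - rmOp R4 Ω a b) * Ω a b
        = 1/2 * (∑ k, (∑ i, R4 a i k i) * Ω k b * Ω a b)
        + 1/2 * (∑ k, Ω a k * (∑ i, R4 k i b i) * Ω a b)
        - 1/2 * (∑ i, ∑ j, R4 i j a b * Ω i j * Ω a b) := by
      intro a b
      have e1 : (∑ k, ((∑ i, R4 a i k i) * Ω k b + Ω a k * (∑ i, R4 k i b i))) * Ω a b
          = (∑ k, (∑ i, R4 a i k i) * Ω k b * Ω a b)
            + ∑ k, Ω a k * (∑ i, R4 k i b i) * Ω a b := by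
        rw [Finset.sum_mul, ← Finset.sum_add_distrib]
        exact Finset.sum_congr rfl fun k _ => by ring
      have e2 : (∑ i, ∑ j, R4 i j a b * Ω i j) * Ω a b
          = ∑ i, ∑ j, R4 i j a b * Ω i j * Ω a b := by
        rw [Finset.sum_mul]
        exact Finset.sum_congr rfl fun i _ => Finset.sum_mul _ _ _
      simp only [ricWedgeId, rmOp]
      rw [sub_mul, mul_assoc, mul_assoc, e1, e2]
      ring
    have hP1 : ∑ a, ∑ b, ∑ k, (∑ i, R4 a i k i) * Ω k b * Ω a b = T2 := by
      rw [hT2def]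
      refine Finset.sum_congr rfl fun a _ => ?_
      rw [Finset.sum_comm]
      refine nw_congr2 fun k b => by ring
    have hP2 : ∑ a, ∑ b, ∑ k, Ω a k * (∑ i, R4 k i b i) * Ω a b = T2 := by
      rw [hT2def]
      calc ∑ a, ∑ b, ∑ k, Ω a k * (∑ i, R4 k i b i) * Ω a b
          = ∑ a, ∑ b, ∑ k, (∑ i, R4 k i b i) * (Ω k a * Ω b a) := by
            refine nw_congr3 fun a b k => ?_
            rw [hΩanti k a, hΩanti b a]; ring
        _ = ∑ a, ∑ k, ∑ b, (∑ i, R4 a i k i) * (Ω a b * Ω k b) :=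
            nw_rev3 (fun a b k => (∑ i, R4 a i b i) * (Ω a k * Ω b k))
    have hP3 : ∑ a, ∑ b, ∑ i, ∑ j, R4 i j a b * Ω i j * Ω a b = G := by
      rw [hGdef]
      calc ∑ a, ∑ b, ∑ i, ∑ j, R4 i j a b * Ω i j * Ω a b
          = ∑ i, ∑ j, ∑ k, ∑ l, R4 i j k l * Ω i j * Ω k l :=
            nw_pairswap4 (fun i j k l => R4 i j k l * Ω i j * Ω k l)
        _ = ∑ i, ∑ j, ∑ k, ∑ l, R4 i j k l * (Ω i j * Ω k l) :=
            nw_congr4 fun i j k l => by ring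
    calc soInner (fun a b => ricWedgeId R4 Ω a b - rmOp R4 Ω a b) Ω
        = (1/2) * ∑ a, ∑ b, (ricWedgeId R4 Ω a b - rmOp R4 Ω a b) * Ω a b := rfl
      _ = (1/2) * ∑ a, ∑ b, (1/2 * (∑ k, (∑ i, R4 a i k i) * Ω k b * Ω a b)
            + 1/2 * (∑ k, Ω a k * (∑ i, R4 k i b i) * Ω a b)
            - 1/2 * (∑ i, ∑ j, R4 i j a b * Ω i j * Ω a b)) := by
          rw [nw_congr2 inner_eq]
      _ = (1/2) * (1/2 * (∑ a, ∑ b, ∑ k, (∑ i, R4 a i k i) * Ω k b * Ω a b)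
            + 1/2 * (∑ a, ∑ b, ∑ k, Ω a k * (∑ i, R4 k i b i) * Ω a b)
            - 1/2 * (∑ a, ∑ b, ∑ i, ∑ j, R4 i j a b * Ω i j * Ω a b)) := by
          simp only [Finset.sum_add_distrib, Finset.sum_sub_distrib, ← Finset.mul_sum]
      _ = (1/2)*T2 - (1/4)*G := by rw [hP1, hP2, hP3]; ring

  have step2 : G = 2*G2 := by
    have hzero : ∀ i j k l : Fin n, R4 i j k l * (Ω i j * Ω k l)
        + R4 j k i l * (Ω i j * Ω k l) + R4 k i j l * (Ω i j * Ω k l) = 0 := by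
      intro i j k l
      linear_combination (Ω i j * Ω k l) * s3 i j k l
    have hsum : (∑ i, ∑ j, ∑ k, ∑ l, (R4 i j k l * (Ω i j * Ω k l)
        + R4 j k i l * (Ω i j * Ω k l) + R4 k i j l * (Ω i j * Ω k l))) = 0 := by
      rw [nw_congr4 hzero]; simp
    have hsplit : (∑ i, ∑ j, ∑ k, ∑ l, (R4 i j k l * (Ω i j * Ω k l)
        + R4 j k i l * (Ω i j * Ω k l) + R4 k i j l * (Ω i j * Ω k l)))
        = G + (∑ i, ∑ j, ∑ k, ∑ l, R4 j k i l * (Ω i j * Ω k l))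
          + (∑ i, ∑ j, ∑ k, ∑ l, R4 k i j l * (Ω i j * Ω k l)) := by
      rw [hGdef]; simp [Finset.sum_add_distrib]
    have hX : (∑ i, ∑ j, ∑ k, ∑ l, R4 j k i l * (Ω i j * Ω k l)) = - G2 := by
      rw [hG2def]
      calc ∑ i, ∑ j, ∑ k, ∑ l, R4 j k i l * (Ω i j * Ω k l)
          = ∑ i, ∑ j, ∑ k, ∑ l, R4 i j k l * (Ω k i * Ω j l) :=
            nw_cycA4 (fun a b c d => R4 a b c d * (Ω c a * Ω b d))
        _ = ∑ i, ∑ j, ∑ k, ∑ l, -(R4 i j k l * (Ω i k * Ω j l)) := by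
            refine nw_congr4 fun i j k l => ?_
            rw [hΩanti k i]; ring
        _ = - ∑ i, ∑ j, ∑ k, ∑ l, R4 i j k l * (Ω i k * Ω j l) := by
            simp [Finset.sum_neg_distrib]
    have hY : (∑ i, ∑ j, ∑ k, ∑ l, R4 k i j l * (Ω i j * Ω k l)) = - G2 := by
      rw [hG2def]
      calc ∑ i, ∑ j, ∑ k, ∑ l, R4 k i j l * (Ω i j * Ω k l)
          = ∑ i, ∑ j, ∑ k, ∑ l, R4 i j k l * (Ω j k * Ω i l) :=
            nw_cycB4 (fun a b c d => R4 a b c d * (Ω b c * Ω a d))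
        _ = ∑ i, ∑ j, ∑ k, ∑ l, (fun a b c d => R4 a b d c * (Ω b d * Ω a c)) i j l k := by
            refine nw_congr4 fun i j k l => rfl
        _ = ∑ i, ∑ j, ∑ k, ∑ l, R4 i j l k * (Ω j l * Ω i k) :=
            nw_swaplast4 (fun a b c d => R4 a b d c * (Ω b d * Ω a c))
        _ = ∑ i, ∑ j, ∑ k, ∑ l, -(R4 i j k l * (Ω i k * Ω j l)) := by
            refine nw_congr4 fun i j k l => ?_
            rw [s4 i j k l]; ring
        _ = - ∑ i, ∑ j, ∑ k, ∑ l, R4 i j k l * (Ω i k * Ω j l) := by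
            simp [Finset.sum_neg_distrib]
    rw [hsplit, hX, hY] at hsum
    linarith

  -- spectral decomposition of Ω
  set Oc : Matrix (Fin n) (Fin n) ℂ := Matrix.of fun j l => (-Complex.I) * (Ω j l : ℂ) with hOc
  have hHerm : Oc.IsHermitian := by
    rw [Matrix.IsHermitian]
    ext j l
    simp only [Matrix.conjTranspose_apply, hOc, Matrix.of_apply, star_mul', star_neg,
      Complex.star_def, Complex.conj_I, Complex.conj_ofReal]
    rw [hΩanti l j]
    push_cast
    ring
  set u : Fin n → Fin n → ℂ := fun j m =>
    (hHerm.eigenvectorUnitary : Matrix (Fin n) (Fin n) ℂ) j m with hu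
  set lam : Fin n → ℝ := hHerm.eigenvalues with hlam
  have hB : ∀ j l, ∑ m, (lam m : ℂ) * u j m * star (u l m) = (-Complex.I) * (Ω j l : ℂ) := by
    intro j l
    have h2 := congrArg (fun M => M j l) hHerm.spectral_theorem
    simp only [Unitary.conjStarAlgAut_apply, Matrix.mul_apply, Matrix.diagonal_apply, Function.comp_apply,
      Matrix.conjTranspose_apply, Matrix.star_apply,
      mul_ite, mul_zero, ite_mul, zero_mul, Finset.sum_ite_eq', Finset.mem_univ, if_true] at h2
    have h3 : (-Complex.I) * ((Ω j l : ℝ) : ℂ) = Oc j l := by rw [hOc]; rfl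
    rw [h3, h2]
    exact Finset.sum_congr rfl fun m _ => by rw [mul_comm ((lam m : ℂ)) (u j m)]; rfl
  have hcol : ∀ m p, ∑ j, star (u j m) * u j p = if m = p then 1 else 0 := by
    intro m p
    have h1 : (star (hHerm.eigenvectorUnitary : Matrix (Fin n) (Fin n) ℂ) *
        (hHerm.eigenvectorUnitary : Matrix (Fin n) (Fin n) ℂ)) = 1 :=
      Unitary.coe_star_mul_self _
    have h2 := congrArg (fun M => M m p) h1
    simpa [hu, Matrix.mul_apply, Matrix.one_apply, Matrix.conjTranspose_apply,
      Matrix.star_apply] using h2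
  have hrow : ∀ j l, ∑ m, u j m * star (u l m) = if j = l then 1 else 0 := by
    intro j l
    have h1 : ((hHerm.eigenvectorUnitary : Matrix (Fin n) (Fin n) ℂ) *
        star (hHerm.eigenvectorUnitary : Matrix (Fin n) (Fin n) ℂ)) = 1 :=
      Unitary.coe_mul_star_self _
    have h2 := congrArg (fun M => M j l) h1
    simpa [hu, Matrix.mul_apply, Matrix.one_apply, Matrix.conjTranspose_apply,
      Matrix.star_apply] using h2
  -- the complex sectional curvatures
  set K : Fin n → Fin n → ℂ := fun m p => ∑ i, ∑ j, ∑ k, ∑ l,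
    u i m * u j p * star (u k m) * star (u l p) * (R4 i j k l : ℂ) with hKdef
  set L : Fin n → Fin n → ℂ := fun m p => ∑ i, ∑ j, ∑ k, ∑ l,
    u i m * star (u j p) * star (u k m) * u l p * (R4 i j k l : ℂ) with hLdef
  have hK : ∀ m p, 0 ≤ (K m p).re := fun m p => hcplx (fun i => u i m) (fun j => u j p)
  have hL : ∀ m p, 0 ≤ (L m p).re := by
    intro m p
    have := hcplx (fun i => u i m) (fun j => star (u j p))
    simpa only [star_star] using this
  have Ksym : ∀ m p, K p m = K m p := by
    intro m p
    rw [hKdef]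
    calc (∑ i, ∑ j, ∑ k, ∑ l, u i p * u j m * star (u k p) * star (u l m) * (R4 i j k l : ℂ))
        = ∑ i, ∑ j, ∑ k, ∑ l,
            (fun a b c d => u b p * u a m * star (u d p) * star (u c m) * (R4 b a d c : ℂ)) j i l k := by
          refine nw_congr4 fun i j k l => rfl
      _ = ∑ i, ∑ j, ∑ k, ∑ l, u j p * u i m * star (u l p) * star (u k m) * (R4 j i l k : ℂ) :=
          nw_swapD4 (fun a b c d => u b p * u a m * star (u d p) * star (u c m) * (R4 b a d c : ℂ))
      _ = ∑ i, ∑ j, ∑ k, ∑ l, u i m * u j p * star (u k m) * star (u l p) * (R4 i j k l : ℂ) := by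
          refine nw_congr4 fun i j k l => ?_
          rw [sdbl i j k l]; ring

  have Lsym : ∀ m p, L p m = L m p := by
    intro m p
    rw [hLdef]
    calc (∑ i, ∑ j, ∑ k, ∑ l, u i p * star (u j m) * star (u k p) * u l m * (R4 i j k l : ℂ))
        = ∑ i, ∑ j, ∑ k, ∑ l,
            (fun a b c d => u d p * star (u c m) * star (u b p) * u a m * (R4 d c b a : ℂ)) l k j i := by
          refine nw_congr4 fun i j k l => rfl
      _ = ∑ i, ∑ j, ∑ k, ∑ l, u l p * star (u k m) * star (u j p) * u i m * (R4 l k j i : ℂ) :=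
          nw_rev4 (fun a b c d => u d p * star (u c m) * star (u b p) * u a m * (R4 d c b a : ℂ))
      _ = ∑ i, ∑ j, ∑ k, ∑ l, u i m * star (u j p) * star (u k m) * u l p * (R4 i j k l : ℂ) := by
          refine nw_congr4 fun i j k l => ?_
          rw [show R4 l k j i = R4 i j k l from by rw [s2 l k j i]; exact sdbl i j k l]
          ring

  have hPhi : ∀ a k : Fin n, ∑ b, ((Ω a b : ℂ) * (Ω k b : ℂ))
      = ∑ m, ((lam m : ℂ))^2 * (u a m * star (u k m)) := by
    intro a k
    have hO2 : ∀ b, ((Ω a b : ℂ) * (Ω k b : ℂ))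
        = (∑ m, (lam m : ℂ) * u a m * star (u b m)) * (∑ p, (lam p : ℂ) * u b p * star (u k p)) := by
      intro b
      rw [hB a b, hB b k, hΩanti b k]
      push_cast
      linear_combination (((Ω a b : ℝ) : ℂ) * ((Ω k b : ℝ) : ℂ)) * Complex.I_mul_I
    calc ∑ b, ((Ω a b : ℂ) * (Ω k b : ℂ))
        = ∑ b, ∑ m, ∑ p, ((lam m : ℂ) * u a m * star (u b m)) * ((lam p : ℂ) * u b p * star (u k p)) := by
          refine Finset.sum_congr rfl fun b _ => ?_
          rw [hO2 b, Finset.sum_mul_sum]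
      _ = ∑ m, ∑ p, ∑ b, ((lam m : ℂ) * u a m * star (u b m)) * ((lam p : ℂ) * u b p * star (u k p)) :=
          nw_swap3 _
      _ = ∑ m, ∑ p, ((lam m : ℂ) * u a m * ((lam p : ℂ) * star (u k p))) * ∑ b, (star (u b m) * u b p) := by
          refine nw_congr2 fun m p => ?_
          rw [Finset.mul_sum]
          exact Finset.sum_congr rfl fun b _ => by ring
      _ = ∑ m, ∑ p, ((lam m : ℂ) * u a m * ((lam p : ℂ) * star (u k p))) * (if m = p then 1 else 0) :=
          nw_congr2 fun m p => by rw [hcol m p]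
      _ = ∑ m, ((lam m : ℂ))^2 * (u a m * star (u k m)) := by
          refine Finset.sum_congr rfl fun m _ => ?_
          simp only [mul_ite, mul_one, mul_zero, Finset.sum_ite_eq, Finset.mem_univ, if_true]
          ring
  have hTraceK : ∀ m, ∑ p, K m p = ∑ a, ∑ k, (∑ i, (R4 a i k i : ℂ)) * (u a m * star (u k m)) := by
    intro m
    calc ∑ p, K m p
        = ∑ p, ∑ i, ∑ j, ∑ k, ∑ l, u i m * u j p * star (u k m) * star (u l p) * (R4 i j k l : ℂ) := by
          simp only [hKdef]
      _ = ∑ i, ∑ j, ∑ k, ∑ l, ∑ p, u i m * u j p * star (u k m) * star (u l p) * (R4 i j k l : ℂ) :=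
          nw_swap5 _
      _ = ∑ i, ∑ j, ∑ k, ∑ l, (u i m * star (u k m) * (R4 i j k l : ℂ)) * ∑ p, (u j p * star (u l p)) := by
          refine nw_congr4 fun i j k l => ?_
          rw [Finset.mul_sum]
          exact Finset.sum_congr rfl fun p _ => by ring
      _ = ∑ i, ∑ j, ∑ k, ∑ l, (u i m * star (u k m) * (R4 i j k l : ℂ)) * (if j = l then 1 else 0) :=
          nw_congr4 fun i j k l => by rw [hrow j l]
      _ = ∑ i, ∑ j, ∑ k, (u i m * star (u k m) * (R4 i j k j : ℂ)) := by
          refine nw_congr3 fun i j k => ?_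
          simp only [mul_ite, mul_one, mul_zero, Finset.sum_ite_eq, Finset.mem_univ, if_true]
      _ = ∑ i, ∑ k, ∑ j, (u i m * star (u k m) * (R4 i j k j : ℂ)) :=
          nw_swap23 (fun i j k => u i m * star (u k m) * (R4 i j k j : ℂ))
      _ = ∑ a, ∑ k, (∑ i, (R4 a i k i : ℂ)) * (u a m * star (u k m)) := by
          refine nw_congr2 fun a k => ?_
          rw [Finset.sum_mul]
          exact Finset.sum_congr rfl fun j _ => by ring
  have hTraceL : ∀ m, ∑ p, L m p = ∑ a, ∑ k, (∑ i, (R4 a i k i : ℂ)) * (u a m * star (u k m)) := by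
    intro m
    calc ∑ p, L m p
        = ∑ p, ∑ i, ∑ j, ∑ k, ∑ l, u i m * star (u j p) * star (u k m) * u l p * (R4 i j k l : ℂ) := by
          simp only [hLdef]
      _ = ∑ i, ∑ j, ∑ k, ∑ l, ∑ p, u i m * star (u j p) * star (u k m) * u l p * (R4 i j k l : ℂ) :=
          nw_swap5 _
      _ = ∑ i, ∑ j, ∑ k, ∑ l, (u i m * star (u k m) * (R4 i j k l : ℂ)) * ∑ p, (u l p * star (u j p)) := by
          refine nw_congr4 fun i j k l => ?_
          rw [Finset.mul_sum]
          exact Finset.sum_congr rfl fun p _ => by ring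
      _ = ∑ i, ∑ j, ∑ k, ∑ l, (u i m * star (u k m) * (R4 i j k l : ℂ)) * (if l = j then 1 else 0) :=
          nw_congr4 fun i j k l => by rw [hrow l j]
      _ = ∑ i, ∑ j, ∑ k, (u i m * star (u k m) * (R4 i j k j : ℂ)) := by
          refine nw_congr3 fun i j k => ?_
          simp only [mul_ite, mul_one, mul_zero, Finset.sum_ite_eq', Finset.mem_univ, if_true]
      _ = ∑ i, ∑ k, ∑ j, (u i m * star (u k m) * (R4 i j k j : ℂ)) :=
          nw_swap23 (fun i j k => u i m * star (u k m) * (R4 i j k j : ℂ))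
      _ = ∑ a, ∑ k, (∑ i, (R4 a i k i : ℂ)) * (u a m * star (u k m)) := by
          refine nw_congr2 fun a k => ?_
          rw [Finset.sum_mul]
          exact Finset.sum_congr rfl fun j _ => by ring
  have Icommon : (∑ a, ∑ k, ∑ b, (∑ i, (R4 a i k i : ℂ)) * ((Ω a b : ℂ) * (Ω k b : ℂ)))
      = ∑ m, (lam m : ℂ)^2 * ∑ a, ∑ k, (∑ i, (R4 a i k i : ℂ)) * (u a m * star (u k m)) := by
    calc (∑ a, ∑ k, ∑ b, (∑ i, (R4 a i k i : ℂ)) * ((Ω a b : ℂ) * (Ω k b : ℂ)))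
        = ∑ a, ∑ k, (∑ i, (R4 a i k i : ℂ)) * ∑ b, ((Ω a b : ℂ) * (Ω k b : ℂ)) :=
          nw_congr2 fun a k => (Finset.mul_sum _ _ _).symm
      _ = ∑ a, ∑ k, (∑ i, (R4 a i k i : ℂ)) * ∑ m, ((lam m : ℂ))^2 * (u a m * star (u k m)) :=
          nw_congr2 fun a k => by rw [hPhi a k]
      _ = ∑ a, ∑ k, ∑ m, (lam m : ℂ)^2 * ((∑ i, (R4 a i k i : ℂ)) * (u a m * star (u k m))) := by
          refine nw_congr2 fun a k => ?_
          rw [Finset.mul_sum]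
          exact Finset.sum_congr rfl fun m _ => by ring
      _ = ∑ m, ∑ a, ∑ k, (lam m : ℂ)^2 * ((∑ i, (R4 a i k i : ℂ)) * (u a m * star (u k m))) :=
          (nw_swap3 (fun m a k => (lam m : ℂ)^2 * ((∑ i, (R4 a i k i : ℂ)) * (u a m * star (u k m))))).symm
      _ = ∑ m, (lam m : ℂ)^2 * ∑ a, ∑ k, (∑ i, (R4 a i k i : ℂ)) * (u a m * star (u k m)) := by
          refine Finset.sum_congr rfl fun m _ => ?_
          simp only [← Finset.mul_sum]
  have I1 : (∑ a, ∑ k, ∑ b, (∑ i, (R4 a i k i : ℂ)) * ((Ω a b : ℂ) * (Ω k b : ℂ)))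
      = ∑ m, ∑ p, ((lam m : ℂ))^2 * K m p := by
    rw [Icommon]
    refine Finset.sum_congr rfl fun m _ => ?_
    rw [← hTraceK m, Finset.mul_sum]

  have I1' : (∑ a, ∑ k, ∑ b, (∑ i, (R4 a i k i : ℂ)) * ((Ω a b : ℂ) * (Ω k b : ℂ)))
      = ∑ m, ∑ p, ((lam m : ℂ))^2 * L m p := by
    rw [Icommon]
    refine Finset.sum_congr rfl fun m _ => ?_
    rw [← hTraceL m, Finset.mul_sum]

  have I2 : (∑ i, ∑ j, ∑ k, ∑ l, (R4 i j k l : ℂ) * ((Ω i k : ℂ) * (Ω j l : ℂ)))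
      = - ∑ m, ∑ p, ((lam m : ℂ) * (lam p : ℂ)) * K m p := by
    have hO3 : ∀ i j k l : Fin n, (R4 i j k l : ℂ) * ((Ω i k : ℂ) * (Ω j l : ℂ))
        = -((∑ m, (lam m : ℂ) * u i m * star (u k m)) * (∑ p, (lam p : ℂ) * u j p * star (u l p))
            * (R4 i j k l : ℂ)) := by
      intro i j k l
      rw [hB i k, hB j l]
      linear_combination (((Ω i k : ℝ) : ℂ) * ((Ω j l : ℝ) : ℂ) * ((R4 i j k l : ℝ) : ℂ)) * Complex.I_mul_I
    calc (∑ i, ∑ j, ∑ k, ∑ l, (R4 i j k l : ℂ) * ((Ω i k : ℂ) * (Ω j l : ℂ)))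
        = ∑ i, ∑ j, ∑ k, ∑ l, -((∑ m, (lam m : ℂ) * u i m * star (u k m))
            * (∑ p, (lam p : ℂ) * u j p * star (u l p)) * (R4 i j k l : ℂ)) :=
          nw_congr4 hO3
      _ = - ∑ i, ∑ j, ∑ k, ∑ l, (∑ m, (lam m : ℂ) * u i m * star (u k m))
            * (∑ p, (lam p : ℂ) * u j p * star (u l p)) * (R4 i j k l : ℂ) := by
          simp only [Finset.sum_neg_distrib]
      _ = - ∑ i, ∑ j, ∑ k, ∑ l, ∑ m, ∑ p, ((lam m : ℂ) * u i m * star (u k m))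
            * ((lam p : ℂ) * u j p * star (u l p)) * (R4 i j k l : ℂ) := by
          refine congrArg Neg.neg (nw_congr4 fun i j k l => ?_)
          rw [Finset.sum_mul_sum, Finset.sum_mul]
          refine Finset.sum_congr rfl fun m _ => ?_
          rw [Finset.sum_mul]
      _ = - ∑ m, ∑ p, ∑ i, ∑ j, ∑ k, ∑ l, ((lam m : ℂ) * u i m * star (u k m))
            * ((lam p : ℂ) * u j p * star (u l p)) * (R4 i j k l : ℂ) := by
          rw [nw_swap6 (fun m p i j k l => ((lam m : ℂ) * u i m * star (u k m))
            * ((lam p : ℂ) * u j p * star (u l p)) * (R4 i j k l : ℂ))]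
      _ = - ∑ m, ∑ p, ((lam m : ℂ) * (lam p : ℂ)) * K m p := by
          refine congrArg Neg.neg (nw_congr2 fun m p => ?_)
          calc ∑ i, ∑ j, ∑ k, ∑ l, ((lam m : ℂ) * u i m * star (u k m))
                * ((lam p : ℂ) * u j p * star (u l p)) * (R4 i j k l : ℂ)
              = ∑ i, ∑ j, ∑ k, ∑ l, ((lam m : ℂ) * (lam p : ℂ))
                * (u i m * u j p * star (u k m) * star (u l p) * (R4 i j k l : ℂ)) :=
                nw_congr4 fun i j k l => by ring
            _ = ((lam m : ℂ) * (lam p : ℂ)) * ∑ i, ∑ j, ∑ k, ∑ l,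
                u i m * u j p * star (u k m) * star (u l p) * (R4 i j k l : ℂ) := by
                simp only [← Finset.mul_sum]
            _ = ((lam m : ℂ) * (lam p : ℂ)) * K m p := rfl

  have I2' : (∑ i, ∑ j, ∑ k, ∑ l, (R4 i j k l : ℂ) * ((Ω i k : ℂ) * (Ω j l : ℂ)))
      = ∑ m, ∑ p, ((lam m : ℂ) * (lam p : ℂ)) * L m p := by
    have hO4 : ∀ i j k l : Fin n, (R4 i j k l : ℂ) * ((Ω i k : ℂ) * (Ω j l : ℂ))
        = (∑ m, (lam m : ℂ) * u i m * star (u k m)) * (∑ p, (lam p : ℂ) * u l p * star (u j p))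
            * (R4 i j k l : ℂ) := by
      intro i j k l
      rw [hB i k, hB l j, hΩanti l j]
      push_cast
      linear_combination (((Ω i k : ℝ) : ℂ) * ((Ω j l : ℝ) : ℂ) * ((R4 i j k l : ℝ) : ℂ)) * Complex.I_mul_I
    calc (∑ i, ∑ j, ∑ k, ∑ l, (R4 i j k l : ℂ) * ((Ω i k : ℂ) * (Ω j l : ℂ)))
        = ∑ i, ∑ j, ∑ k, ∑ l, (∑ m, (lam m : ℂ) * u i m * star (u k m))
            * (∑ p, (lam p : ℂ) * u l p * star (u j p)) * (R4 i j k l : ℂ) :=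
          nw_congr4 hO4
      _ = ∑ i, ∑ j, ∑ k, ∑ l, ∑ m, ∑ p, ((lam m : ℂ) * u i m * star (u k m))
            * ((lam p : ℂ) * u l p * star (u j p)) * (R4 i j k l : ℂ) := by
          refine nw_congr4 fun i j k l => ?_
          rw [Finset.sum_mul_sum, Finset.sum_mul]
          refine Finset.sum_congr rfl fun m _ => ?_
          rw [Finset.sum_mul]
      _ = ∑ m, ∑ p, ∑ i, ∑ j, ∑ k, ∑ l, ((lam m : ℂ) * u i m * star (u k m))
            * ((lam p : ℂ) * u l p * star (u j p)) * (R4 i j k l : ℂ) := by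
          rw [nw_swap6 (fun m p i j k l => ((lam m : ℂ) * u i m * star (u k m))
            * ((lam p : ℂ) * u l p * star (u j p)) * (R4 i j k l : ℂ))]
      _ = ∑ m, ∑ p, ((lam m : ℂ) * (lam p : ℂ)) * L m p := by
          refine nw_congr2 fun m p => ?_
          calc ∑ i, ∑ j, ∑ k, ∑ l, ((lam m : ℂ) * u i m * star (u k m))
                * ((lam p : ℂ) * u l p * star (u j p)) * (R4 i j k l : ℂ)
              = ∑ i, ∑ j, ∑ k, ∑ l, ((lam m : ℂ) * (lam p : ℂ))
                * (u i m * star (u j p) * star (u k m) * u l p * (R4 i j k l : ℂ)) :=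
                nw_congr4 fun i j k l => by ring
            _ = ((lam m : ℂ) * (lam p : ℂ)) * ∑ i, ∑ j, ∑ k, ∑ l,
                u i m * star (u j p) * star (u k m) * u l p * (R4 i j k l : ℂ) := by
                simp only [← Finset.mul_sum]
            _ = ((lam m : ℂ) * (lam p : ℂ)) * L m p := rfl

  -- main identity
  have castT2 : ((T2 : ℝ) : ℂ)
      = ∑ a, ∑ k, ∑ b, (∑ i, (R4 a i k i : ℂ)) * ((Ω a b : ℂ) * (Ω k b : ℂ)) := by
    rw [hT2def]
    push_cast
    rfl
  have castG2 : ((G2 : ℝ) : ℂ)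
      = ∑ i, ∑ j, ∑ k, ∑ l, (R4 i j k l : ℂ) * ((Ω i k : ℂ) * (Ω j l : ℂ)) := by
    rw [hG2def]
    push_cast
    rfl
  have symK : ∑ m, ∑ p, ((lam p : ℂ))^2 * K m p = ∑ m, ∑ p, ((lam m : ℂ))^2 * K m p := by
    calc ∑ m, ∑ p, ((lam p : ℂ))^2 * K m p
        = ∑ p, ∑ m, ((lam p : ℂ))^2 * K m p := Finset.sum_comm
      _ = ∑ m, ∑ p, ((lam m : ℂ))^2 * K m p := nw_congr2 fun m p => by rw [Ksym m p]
  have symL : ∑ m, ∑ p, ((lam p : ℂ))^2 * L m p = ∑ m, ∑ p, ((lam m : ℂ))^2 * L m p := by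
    calc ∑ m, ∑ p, ((lam p : ℂ))^2 * L m p
        = ∑ p, ∑ m, ((lam p : ℂ))^2 * L m p := Finset.sum_comm
      _ = ∑ m, ∑ p, ((lam m : ℂ))^2 * L m p := nw_congr2 fun m p => by rw [Lsym m p]
  have hsplit6 : ∑ m, ∑ p, (((lam m : ℂ))^2 * K m p + ((lam p : ℂ))^2 * K m p
        + ((lam m : ℂ) * (lam p : ℂ)) * K m p + ((lam m : ℂ) * (lam p : ℂ)) * K m p
        + ((lam m : ℂ))^2 * L m p + ((lam p : ℂ))^2 * L m p
        - ((lam m : ℂ) * (lam p : ℂ)) * L m p - ((lam m : ℂ) * (lam p : ℂ)) * L m p)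
      = (∑ m, ∑ p, ((lam m : ℂ))^2 * K m p) + (∑ m, ∑ p, ((lam p : ℂ))^2 * K m p)
        + (∑ m, ∑ p, ((lam m : ℂ) * (lam p : ℂ)) * K m p)
        + (∑ m, ∑ p, ((lam m : ℂ) * (lam p : ℂ)) * K m p)
        + (∑ m, ∑ p, ((lam m : ℂ))^2 * L m p) + (∑ m, ∑ p, ((lam p : ℂ))^2 * L m p)
        - (∑ m, ∑ p, ((lam m : ℂ) * (lam p : ℂ)) * L m p)
        - (∑ m, ∑ p, ((lam m : ℂ) * (lam p : ℂ)) * L m p) := by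
    simp only [Finset.sum_add_distrib, Finset.sum_sub_distrib]
  have h2main : (2 : ℂ) * (((2*T2 - G : ℝ)) : ℂ)
      = ∑ m, ∑ p, (((lam m : ℂ))^2 * K m p + ((lam p : ℂ))^2 * K m p
        + ((lam m : ℂ) * (lam p : ℂ)) * K m p + ((lam m : ℂ) * (lam p : ℂ)) * K m p
        + ((lam m : ℂ))^2 * L m p + ((lam p : ℂ))^2 * L m p
        - ((lam m : ℂ) * (lam p : ℂ)) * L m p - ((lam m : ℂ) * (lam p : ℂ)) * L m p) := by
    have e0 : (((2*T2 - G : ℝ)) : ℂ)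
        = 2*(∑ a, ∑ k, ∑ b, (∑ i, (R4 a i k i : ℂ)) * ((Ω a b : ℂ) * (Ω k b : ℂ)))
          - 2*(∑ i, ∑ j, ∑ k, ∑ l, (R4 i j k l : ℂ) * ((Ω i k : ℂ) * (Ω j l : ℂ))) := by
      rw [step2]
      push_cast [castT2, castG2]
      ring
    rw [hsplit6, e0]
    linear_combination (2 : ℂ) * I1 - symK + (2 : ℂ) * I1' - symL - 2 * I2 - 2 * I2'
  have hmainC : (((2*T2 - G : ℝ)) : ℂ)
      = ∑ m, ∑ p, ((((lam m + lam p)^2/2 : ℝ) : ℂ) * K m p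
          + (((lam m - lam p)^2/2 : ℝ) : ℂ) * L m p) := by
    have h2' : (2 : ℂ) * (((2*T2 - G : ℝ)) : ℂ)
        = (2 : ℂ) * ∑ m, ∑ p, ((((lam m + lam p)^2/2 : ℝ) : ℂ) * K m p
            + (((lam m - lam p)^2/2 : ℝ) : ℂ) * L m p) := by
      rw [h2main]
      simp only [Finset.mul_sum]
      refine nw_congr2 fun m p => ?_
      push_cast
      ring
    exact mul_left_cancel₀ two_ne_zero h2'
  have main : 2*T2 - G = ∑ m, ∑ p,
      (((lam m + lam p)^2/2) * (K m p).re + ((lam m - lam p)^2/2) * (L m p).re) := by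
    have hre := congrArg Complex.re hmainC
    rw [Complex.ofReal_re] at hre
    rw [hre, Complex.re_sum]
    refine Finset.sum_congr rfl fun m _ => ?_
    rw [Complex.re_sum]
    refine Finset.sum_congr rfl fun p _ => ?_
    rw [Complex.add_re, Complex.re_ofReal_mul, Complex.re_ofReal_mul]

  have hnonneg : 0 ≤ 2*T2 - G := by
    rw [main]
    refine Finset.sum_nonneg fun m _ => Finset.sum_nonneg fun p _ => ?_
    have h1 := hK m p
    have h2 := hL m p
    have c1 : (0:ℝ) ≤ (lam m + lam p)^2/2 := by positivity
    have c2 : (0:ℝ) ≤ (lam m - lam p)^2/2 := by positivity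
    exact add_nonneg (mul_nonneg c1 h1) (mul_nonneg c2 h2)
  rw [step1]
  linarith
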